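/- Let x̄ ∈ F be a feasible point of NSOCP. Nondegeneracy holds at x̄ if, and only if, weak-nondegeneracy holds at x̄ and the linear map ℝ^n → Π_{j∈I_0(x̄)} ℝ^{m_j−1} given by d ↦ (Dĝ_j(x̄)d)_{j∈I_0(x̄)} is surjective. -/

import Mathlib

open Filter Topology

noncomputable section

/-- Euclidean space `ℝ^k`. -/
abbrev Evec (k : ℕ) : Type := EuclideanSpace ℝ (Fin k)

/-- Membership of `y = (y₀, ŷ) ∈ ℝ × ℝ^p` in the second-order (Lorentz) cone `Λ_{1+p}`. -/
def inSOC {p : ℕ} (y : ℝ × Evec p) : Prop := ‖y.2‖ ≤ y.1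

/-- Normalization `v / ‖v‖`. -/
def unitv {p : ℕ} (v : Evec p) : Evec p := ‖v‖⁻¹ • v

/-- The transposed Jacobian `Dg(x)ᵀ u` of `g = (g0, gh) : ℝ^n → ℝ × ℝ^p` at `x`,
applied to `u = (u₀, û) ∈ ℝ × ℝ^p`. -/
def dgT {n p : ℕ} (g0 : Evec n → ℝ) (gh : Evec n → Evec p) (x : Evec n)
    (u : ℝ × Evec p) : Evec n :=
  u.1 • gradient g0 x + ∑ i, u.2 i • gradient (fun y => gh y i) x

/-- Euclidean inner product on `ℝ × ℝ^p`. -/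
def pairInner {p : ℕ} (u v : ℝ × Evec p) : ℝ := u.1 * v.1 + (inner ℝ u.2 v.2 : ℝ)

/-- Squared Euclidean norm on `ℝ × ℝ^p`. -/
def pairSq {p : ℕ} (y : ℝ × Evec p) : ℝ := y.1 ^ 2 + ‖y.2‖ ^ 2

/-- The Euclidean orthogonal projection onto the second-order cone
(expressed through the spectral decomposition). -/
def projSOC {p : ℕ} (y : ℝ × Evec p) : ℝ × Evec p :=
  ((max (y.1 - ‖y.2‖) 0 + max (y.1 + ‖y.2‖) 0) / 2,
    ((max (y.1 + ‖y.2‖) 0 - max (y.1 - ‖y.2‖) 0) / (2 * ‖y.2‖)) • y.2)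

/-- `j ∈ I₀(x)`, i.e. `g_j(x) = 0`. -/
def memI0 {n q : ℕ} {m : Fin q → ℕ} (g0 : Fin q → Evec n → ℝ)
    (gh : (j : Fin q) → Evec n → Evec (m j)) (x : Evec n) (j : Fin q) : Prop :=
  g0 j x = 0 ∧ gh j x = 0

/-- `j ∈ I_B(x)`, i.e. `g_j(x) ≠ 0` and `g_{j,0}(x) = ‖ĝ_j(x)‖`. -/
def memIB {n q : ℕ} {m : Fin q → ℕ} (g0 : Fin q → Evec n → ℝ)
    (gh : (j : Fin q) → Evec n → Evec (m j)) (x : Evec n) (j : Fin q) : Prop :=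
  ¬ (g0 j x = 0 ∧ gh j x = 0) ∧ g0 j x = ‖gh j x‖

/-- The linear combination, with coefficients `η, a, b`, of the family
`D_{J_B,J_-,J_+}(x, w)`: the vectors `Dg_j(x)ᵀ(1, -ĝ_j(x)/‖ĝ_j(x)‖)` (coefficients `η j`),
`Dg_j(x)ᵀ(1, -w j)` (coefficients `a j`) and `Dg_j(x)ᵀ(1, w j)` (coefficients `b j`). -/
def famComb {n q : ℕ} {m : Fin q → ℕ} (g0 : Fin q → Evec n → ℝ)
    (gh : (j : Fin q) → Evec n → Evec (m j)) (x : Evec n)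
    (w : (j : Fin q) → Evec (m j)) (η a b : Fin q → ℝ) : Evec n :=
  ∑ j, (η j • dgT (g0 j) (gh j) x (1, -unitv (gh j x))
      + a j • dgT (g0 j) (gh j) x (1, -(w j))
      + b j • dgT (g0 j) (gh j) x (1, w j))

/-- The family `D_{J_B,J_-,J_+}(x, w)` is linearly dependent. -/
def linDepD {n q : ℕ} {m : Fin q → ℕ} (g0 : Fin q → Evec n → ℝ)
    (gh : (j : Fin q) → Evec n → Evec (m j)) (JB Jm Jp : Fin q → Prop)
    (x : Evec n) (w : (j : Fin q) → Evec (m j)) : Prop :=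
  ∃ η a b : Fin q → ℝ,
    (∀ j, ¬ JB j → η j = 0) ∧ (∀ j, ¬ Jm j → a j = 0) ∧ (∀ j, ¬ Jp j → b j = 0) ∧
    ¬ (∀ j, η j = 0 ∧ a j = 0 ∧ b j = 0) ∧
    famComb g0 gh x w η a b = 0

/-- The family `D_{J_B,J_-,J_+}(x, w)` is positively linearly dependent. -/
def posLinDepD {n q : ℕ} {m : Fin q → ℕ} (g0 : Fin q → Evec n → ℝ)
    (gh : (j : Fin q) → Evec n → Evec (m j)) (JB Jm Jp : Fin q → Prop)
    (x : Evec n) (w : (j : Fin q) → Evec (m j)) : Prop :=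
  ∃ η a b : Fin q → ℝ,
    (∀ j, 0 ≤ η j) ∧ (∀ j, 0 ≤ a j) ∧ (∀ j, 0 ≤ b j) ∧
    (∀ j, ¬ JB j → η j = 0) ∧ (∀ j, ¬ Jm j → a j = 0) ∧ (∀ j, ¬ Jp j → b j = 0) ∧
    ¬ (∀ j, η j = 0 ∧ a j = 0 ∧ b j = 0) ∧
    famComb g0 gh x w η a b = 0

/-- The full family `{Dg_j(x)ᵀ u₁(g_j(x))}_{j ∈ I_B(x)} ∪
`{Dg_j(x)ᵀ(1,-w j), Dg_j(x)ᵀ(1,w j)}_{j ∈ I₀(x)}` is linearly independent. -/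
def famLinIndep {n q : ℕ} {m : Fin q → ℕ} (g0 : Fin q → Evec n → ℝ)
    (gh : (j : Fin q) → Evec n → Evec (m j)) (x : Evec n)
    (w : (j : Fin q) → Evec (m j)) : Prop :=
  ∀ η a b : Fin q → ℝ,
    (∀ j, ¬ memIB g0 gh x j → η j = 0) →
    (∀ j, ¬ memI0 g0 gh x j → a j = 0 ∧ b j = 0) →
    famComb g0 gh x w η a b = 0 →
    ∀ j, η j = 0 ∧ a j = 0 ∧ b j = 0

/-- The full family is positively linearly independent. -/
def famPosLinIndep {n q : ℕ} {m : Fin q → ℕ} (g0 : Fin q → Evec n → ℝ)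
    (gh : (j : Fin q) → Evec n → Evec (m j)) (x : Evec n)
    (w : (j : Fin q) → Evec (m j)) : Prop :=
  ∀ η a b : Fin q → ℝ,
    (∀ j, 0 ≤ η j) → (∀ j, 0 ≤ a j) → (∀ j, 0 ≤ b j) →
    (∀ j, ¬ memIB g0 gh x j → η j = 0) →
    (∀ j, ¬ memI0 g0 gh x j → a j = 0 ∧ b j = 0) →
    famComb g0 gh x w η a b = 0 →
    ∀ j, η j = 0 ∧ a j = 0 ∧ b j = 0

/-- An admissible choice, along the (perturbed) sequence `x k + Δ`, of eigenvector
parameters `w k j` (for `k ∈ I`, `j ∈ I₀(xb)`) together with their limits `wb j`. -/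
def eigParams {n q : ℕ} {m : Fin q → ℕ} (g0 : Fin q → Evec n → ℝ)
    (gh : (j : Fin q) → Evec n → Evec (m j)) (xb : Evec n) (x : ℕ → Evec n)
    (Δ : ℕ → (j : Fin q) → ℝ × Evec (m j)) (I : Set ℕ)
    (w : ℕ → (j : Fin q) → Evec (m j)) (wb : (j : Fin q) → Evec (m j)) : Prop :=
  (∀ k ∈ I, ∀ j, memI0 g0 gh xb j → ‖w k j‖ = 1 ∧
      (gh j (x k) + (Δ k j).2 ≠ 0 → w k j = unitv (gh j (x k) + (Δ k j).2))) ∧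
  (∀ j, memI0 g0 gh xb j → ‖wb j‖ = 1 ∧
      Tendsto (fun k => w k j) (atTop ⊓ 𝓟 I) (𝓝 (wb j)))

/-- Weak-nondegeneracy at `xb`. -/
def weakNondeg {n q : ℕ} {m : Fin q → ℕ} (g0 : Fin q → Evec n → ℝ)
    (gh : (j : Fin q) → Evec n → Evec (m j)) (xb : Evec n) : Prop :=
  ∀ x : ℕ → Evec n, Tendsto x atTop (𝓝 xb) →
    ∃ (I : Set ℕ) (w : ℕ → (j : Fin q) → Evec (m j)) (wb : (j : Fin q) → Evec (m j)),
      I.Infinite ∧ eigParams g0 gh xb x (fun _ _ => 0) I w wb ∧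
      famLinIndep g0 gh xb wb

/-- Weak-Robinson's CQ at `xb`. -/
def weakRobinson {n q : ℕ} {m : Fin q → ℕ} (g0 : Fin q → Evec n → ℝ)
    (gh : (j : Fin q) → Evec n → Evec (m j)) (xb : Evec n) : Prop :=
  ∀ x : ℕ → Evec n, Tendsto x atTop (𝓝 xb) →
    ∃ (I : Set ℕ) (w : ℕ → (j : Fin q) → Evec (m j)) (wb : (j : Fin q) → Evec (m j)),
      I.Infinite ∧ eigParams g0 gh xb x (fun _ _ => 0) I w wb ∧
      famPosLinIndep g0 gh xb wb

/-- Weak-CRCQ at `xb`. -/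
def weakCRCQ {n q : ℕ} {m : Fin q → ℕ} (g0 : Fin q → Evec n → ℝ)
    (gh : (j : Fin q) → Evec n → Evec (m j)) (xb : Evec n) : Prop :=
  ∀ x : ℕ → Evec n, Tendsto x atTop (𝓝 xb) →
    ∃ (I : Set ℕ) (w : ℕ → (j : Fin q) → Evec (m j)) (wb : (j : Fin q) → Evec (m j)),
      I.Infinite ∧ eigParams g0 gh xb x (fun _ _ => 0) I w wb ∧
      ∀ JB Jm Jp : Fin q → Prop,
        (∀ j, JB j → memIB g0 gh xb j) → (∀ j, Jm j → memI0 g0 gh xb j) →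
        (∀ j, Jp j → memI0 g0 gh xb j) →
        linDepD g0 gh JB Jm Jp xb wb →
        ∀ᶠ k in atTop ⊓ 𝓟 I, linDepD g0 gh JB Jm Jp (x k) (w k)

/-- Weak-CPLD at `xb`. -/
def weakCPLD {n q : ℕ} {m : Fin q → ℕ} (g0 : Fin q → Evec n → ℝ)
    (gh : (j : Fin q) → Evec n → Evec (m j)) (xb : Evec n) : Prop :=
  ∀ x : ℕ → Evec n, Tendsto x atTop (𝓝 xb) →
    ∃ (I : Set ℕ) (w : ℕ → (j : Fin q) → Evec (m j)) (wb : (j : Fin q) → Evec (m j)),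
      I.Infinite ∧ eigParams g0 gh xb x (fun _ _ => 0) I w wb ∧
      ∀ JB Jm Jp : Fin q → Prop,
        (∀ j, JB j → memIB g0 gh xb j) → (∀ j, Jm j → memI0 g0 gh xb j) →
        (∀ j, Jp j → memI0 g0 gh xb j) →
        posLinDepD g0 gh JB Jm Jp xb wb →
        ∀ᶠ k in atTop ⊓ 𝓟 I, linDepD g0 gh JB Jm Jp (x k) (w k)

/-- Seq-CRCQ at `xb`. -/
def seqCRCQ {n q : ℕ} {m : Fin q → ℕ} (g0 : Fin q → Evec n → ℝ)
    (gh : (j : Fin q) → Evec n → Evec (m j)) (xb : Evec n) : Prop :=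
  ∀ (x : ℕ → Evec n) (Δ : ℕ → (j : Fin q) → ℝ × Evec (m j)),
    Tendsto x atTop (𝓝 xb) →
    (∀ j, memI0 g0 gh xb j ∨ memIB g0 gh xb j → Tendsto (fun k => Δ k j) atTop (𝓝 0)) →
    ∃ (I : Set ℕ) (w : ℕ → (j : Fin q) → Evec (m j)) (wb : (j : Fin q) → Evec (m j)),
      I.Infinite ∧ eigParams g0 gh xb x Δ I w wb ∧
      ∀ JB Jm Jp : Fin q → Prop,
        (∀ j, JB j → memIB g0 gh xb j) → (∀ j, Jm j → memI0 g0 gh xb j) →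
        (∀ j, Jp j → memI0 g0 gh xb j) →
        linDepD g0 gh JB Jm Jp xb wb →
        ∀ᶠ k in atTop ⊓ 𝓟 I, linDepD g0 gh JB Jm Jp (x k) (w k)

/-- Seq-CPLD at `xb`. -/
def seqCPLD {n q : ℕ} {m : Fin q → ℕ} (g0 : Fin q → Evec n → ℝ)
    (gh : (j : Fin q) → Evec n → Evec (m j)) (xb : Evec n) : Prop :=
  ∀ (x : ℕ → Evec n) (Δ : ℕ → (j : Fin q) → ℝ × Evec (m j)),
    Tendsto x atTop (𝓝 xb) →
    (∀ j, memI0 g0 gh xb j ∨ memIB g0 gh xb j → Tendsto (fun k => Δ k j) atTop (𝓝 0)) →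
    ∃ (I : Set ℕ) (w : ℕ → (j : Fin q) → Evec (m j)) (wb : (j : Fin q) → Evec (m j)),
      I.Infinite ∧ eigParams g0 gh xb x Δ I w wb ∧
      ∀ JB Jm Jp : Fin q → Prop,
        (∀ j, JB j → memIB g0 gh xb j) → (∀ j, Jm j → memI0 g0 gh xb j) →
        (∀ j, Jp j → memI0 g0 gh xb j) →
        posLinDepD g0 gh JB Jm Jp xb wb →
        ∀ᶠ k in atTop ⊓ 𝓟 I, linDepD g0 gh JB Jm Jp (x k) (w k)

/-- The linear combination appearing in the definitions of nondegeneracy and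
Robinson's CQ: `Σ_{j} (η j • Dg_j(x)ᵀ(g_{j,0}(x), -ĝ_j(x)) + Dg_j(x)ᵀ (y j))`. -/
def ndgComb {n q : ℕ} {m : Fin q → ℕ} (g0 : Fin q → Evec n → ℝ)
    (gh : (j : Fin q) → Evec n → Evec (m j)) (x : Evec n)
    (η : Fin q → ℝ) (y : (j : Fin q) → ℝ × Evec (m j)) : Evec n :=
  ∑ j, (η j • dgT (g0 j) (gh j) x (g0 j x, -(gh j x)) + dgT (g0 j) (gh j) x (y j))

/-- Nondegeneracy at `xb`. -/
def Nondegenerate {n q : ℕ} {m : Fin q → ℕ} (g0 : Fin q → Evec n → ℝ)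
    (gh : (j : Fin q) → Evec n → Evec (m j)) (xb : Evec n) : Prop :=
  ∀ (η : Fin q → ℝ) (y : (j : Fin q) → ℝ × Evec (m j)),
    (∀ j, ¬ memIB g0 gh xb j → η j = 0) →
    (∀ j, ¬ memI0 g0 gh xb j → y j = 0) →
    ndgComb g0 gh xb η y = 0 →
    (∀ j, η j = 0) ∧ (∀ j, y j = 0)

/-- Robinson's CQ at `xb`. -/
def RobinsonCQ {n q : ℕ} {m : Fin q → ℕ} (g0 : Fin q → Evec n → ℝ)
    (gh : (j : Fin q) → Evec n → Evec (m j)) (xb : Evec n) : Prop :=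
  ∀ (η : Fin q → ℝ) (y : (j : Fin q) → ℝ × Evec (m j)),
    (∀ j, 0 ≤ η j) → (∀ j, inSOC (y j)) →
    (∀ j, ¬ memIB g0 gh xb j → η j = 0) →
    (∀ j, ¬ memI0 g0 gh xb j → y j = 0) →
    ndgComb g0 gh xb η y = 0 →
    (∀ j, η j = 0) ∧ (∀ j, y j = 0)

/-- The KKT conditions at `xb` for objective `f`. -/
def isKKT {n q : ℕ} {m : Fin q → ℕ} (f : Evec n → ℝ) (g0 : Fin q → Evec n → ℝ)
    (gh : (j : Fin q) → Evec n → Evec (m j)) (xb : Evec n) : Prop :=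
  ∃ μ : (j : Fin q) → ℝ × Evec (m j),
    (∀ j, inSOC (μ j)) ∧
    gradient f xb = ∑ j, dgT (g0 j) (gh j) xb (μ j) ∧
    ∀ j, pairInner (μ j) (g0 j xb, gh j xb) = 0

/-- The metric subregularity CQ (MSCQ) at `xb`, with Euclidean distances. -/
def MSCQat {n q : ℕ} {m : Fin q → ℕ} (g0 : Fin q → Evec n → ℝ)
    (gh : (j : Fin q) → Evec n → Evec (m j)) (xb : Evec n) : Prop :=
  ∃ γ > (0:ℝ), ∃ ε > (0:ℝ), ∀ x : Evec n, ‖x - xb‖ < ε →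
    Metric.infDist x {z : Evec n | ∀ j, ‖gh j z‖ ≤ g0 j z} ≤
      γ * sInf {d : ℝ | ∃ z : (j : Fin q) → ℝ × Evec (m j),
        (∀ j, inSOC (z j)) ∧
        d = Real.sqrt (∑ j, ((g0 j x - (z j).1) ^ 2 + ‖gh j x - (z j).2‖ ^ 2))}
open Filter Topology InnerProductSpace

section Helpers
variable {n p : ℕ}

lemma inner_gradient (h : Evec n → ℝ) (x d : Evec n) :
    (inner ℝ (gradient h x) d : ℝ) = fderiv ℝ h x d :=
  InnerProductSpace.toDual_symm_apply

lemma unitv_norm {v : Evec p} (hv : v ≠ 0) : ‖unitv v‖ = 1 := by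
  simp [unitv, norm_smul, inv_mul_cancel₀ (norm_ne_zero_iff.mpr hv)]

lemma unitv_ne_zero {v : Evec p} (hv : v ≠ 0) : unitv v ≠ 0 := by
  intro h; have := unitv_norm hv; rw [h] at this; simp at this

lemma norm_smul_unitv {v : Evec p} (hv : v ≠ 0) : ‖v‖ • unitv v = v := by
  rw [unitv, smul_smul, mul_inv_cancel₀ (norm_ne_zero_iff.mpr hv), one_smul]

lemma unitv_smul_pos {c : ℝ} (hc : 0 < c) (v : Evec p) : unitv (c • v) = unitv v := by
  rcases eq_or_ne v 0 with rfl | hv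
  · simp [unitv]
  · rw [unitv, unitv, norm_smul, Real.norm_eq_abs, abs_of_pos hc, mul_inv, smul_smul]
    congr 1
    rw [mul_comm, ← mul_assoc, mul_inv_cancel₀ hc.ne', one_mul]

lemma unitv_of_norm_one {v : Evec p} (hv : ‖v‖ = 1) : unitv v = v := by
  rw [unitv, hv]; simp

lemma continuousAt_unitv {v : Evec p} (hv : v ≠ 0) :
    ContinuousAt (unitv : Evec p → Evec p) v := by
  have : ContinuousAt (fun w : Evec p => ‖w‖⁻¹ • w) v :=
    ((continuous_norm.continuousAt).inv₀ (norm_ne_zero_iff.mpr hv)).smul continuousAt_id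
  exact this

lemma dgT_add (g0 : Evec n → ℝ) (gh : Evec n → Evec p) (x : Evec n) (u v : ℝ × Evec p) :
    dgT g0 gh x (u + v) = dgT g0 gh x u + dgT g0 gh x v := by
  simp only [dgT, Prod.fst_add, Prod.snd_add, PiLp.add_apply, add_smul,
    Finset.sum_add_distrib]
  abel

lemma dgT_smul (g0 : Evec n → ℝ) (gh : Evec n → Evec p) (x : Evec n) (c : ℝ) (u : ℝ × Evec p) :
    dgT g0 gh x (c • u) = c • dgT g0 gh x u := by
  simp only [dgT, Prod.smul_fst, Prod.smul_snd, PiLp.smul_apply, smul_eq_mul, mul_smul,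
    smul_add, Finset.smul_sum]

lemma dgT_zero (g0 : Evec n → ℝ) (gh : Evec n → Evec p) (x : Evec n) :
    dgT g0 gh x 0 = 0 := by
  simp [dgT]

end Helpers
section Deriv
variable {n p : ℕ} {g0 : Evec n → ℝ} {gh : Evec n → Evec p}

lemma gh_diff (hg : ContDiff ℝ 1 fun x => (g0 x, gh x)) : Differentiable ℝ gh :=
  (contDiff_snd.comp hg).differentiable one_ne_zero

lemma g0_diff (hg : ContDiff ℝ 1 fun x => (g0 x, gh x)) : Differentiable ℝ g0 :=
  (contDiff_fst.comp hg).differentiable one_ne_zero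

lemma fderiv_gh_apply (hg : ContDiff ℝ 1 fun x => (g0 x, gh x)) (x : Evec n) (i : Fin p) :
    fderiv ℝ (fun y => gh y i) x = (EuclideanSpace.proj i).comp (fderiv ℝ gh x) := by
  have h : HasFDerivAt (fun y => gh y i)
      ((EuclideanSpace.proj (𝕜 := ℝ) i).comp (fderiv ℝ gh x)) x :=
    (EuclideanSpace.proj (𝕜 := ℝ) i).hasFDerivAt.comp x (gh_diff hg x).hasFDerivAt
  exact h.fderiv

lemma inner_dgT (hg : ContDiff ℝ 1 fun x => (g0 x, gh x)) (x d : Evec n) (u : ℝ × Evec p) :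
    (inner ℝ (dgT g0 gh x u) d : ℝ)
      = u.1 * fderiv ℝ g0 x d + (inner ℝ u.2 (fderiv ℝ gh x d) : ℝ) := by
  simp only [dgT, inner_add_left, sum_inner, real_inner_smul_left, inner_gradient]
  congr 1
  rw [PiLp.inner_apply]
  refine Finset.sum_congr rfl fun i _ => ?_
  rw [fderiv_gh_apply hg]
  simp [RCLike.inner_apply, mul_comm]

end Deriv
section Fam
variable {n q : ℕ} {m : Fin q → ℕ} {g0 : Fin q → Evec n → ℝ}
  {gh : (j : Fin q) → Evec n → Evec (m j)} {xb : Evec n}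

lemma memIB_facts {j : Fin q} (h : memIB g0 gh xb j) :
    gh j xb ≠ 0 ∧ 0 < g0 j xb := by
  obtain ⟨h1, h2⟩ := h
  have hgh : gh j xb ≠ 0 := fun h0 => h1 ⟨by rw [h2, h0, norm_zero], h0⟩
  exact ⟨hgh, h2 ▸ norm_pos_iff.mpr hgh⟩

lemma dgT_IB {j : Fin q} (h : memIB g0 gh xb j) :
    dgT (g0 j) (gh j) xb (g0 j xb, -(gh j xb))
      = g0 j xb • dgT (g0 j) (gh j) xb (1, -unitv (gh j xb)) := by
  have hp : (g0 j xb • ((1:ℝ), -unitv (gh j xb)) : ℝ × Evec (m j)) = (g0 j xb, -(gh j xb)) := by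
    rw [Prod.smul_mk, smul_eq_mul, mul_one, smul_neg, h.2, norm_smul_unitv (memIB_facts h).1]
  rw [← hp, dgT_smul]

lemma nondeg_famLinIndep (hnd : Nondegenerate g0 gh xb)
    (wb : (j : Fin q) → Evec (m j)) (hwb : ∀ j, memI0 g0 gh xb j → wb j ≠ 0) :
    famLinIndep g0 gh xb wb := by
  classical
  intro η a b hη hab hcomb
  set η' : Fin q → ℝ := fun j => if memIB g0 gh xb j then η j * (g0 j xb)⁻¹ else 0 with hη'
  set y : (j : Fin q) → ℝ × Evec (m j) := fun j =>
    if memI0 g0 gh xb j then a j • ((1:ℝ), -(wb j)) + b j • ((1:ℝ), wb j) else 0 with hy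
  have hcomb' : ndgComb g0 gh xb η' y = 0 := by
    rw [← hcomb, ndgComb, famComb]
    refine Finset.sum_congr rfl fun j _ => ?_
    have h1 : η' j • dgT (g0 j) (gh j) xb (g0 j xb, -(gh j xb))
        = η j • dgT (g0 j) (gh j) xb (1, -unitv (gh j xb)) := by
      by_cases hB : memIB g0 gh xb j
      · rw [hη']; simp only [if_pos hB]
        rw [dgT_IB hB, smul_smul, mul_assoc,
          inv_mul_cancel₀ (memIB_facts hB).2.ne', mul_one]
      · rw [hη', hη j hB]; simp [hB]
    have h2 : dgT (g0 j) (gh j) xb (y j)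
        = a j • dgT (g0 j) (gh j) xb (1, -(wb j)) + b j • dgT (g0 j) (gh j) xb (1, wb j) := by
      by_cases h0 : memI0 g0 gh xb j
      · rw [hy]; simp only [if_pos h0]
        rw [dgT_add, dgT_smul, dgT_smul]
      · rw [hy]; simp only [if_neg h0]
        rw [(hab j h0).1, (hab j h0).2, dgT_zero, zero_smul, zero_smul, add_zero]
    rw [h1, h2, add_assoc]
  have hsupη : ∀ j, ¬ memIB g0 gh xb j → η' j = 0 := fun j hj => by
    rw [hη']; simp [hj]
  have hsupy : ∀ j, ¬ memI0 g0 gh xb j → y j = 0 := fun j hj => by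
    rw [hy]; simp [hj]
  obtain ⟨hη0, hy0⟩ := hnd η' y hsupη hsupy hcomb'
  intro j
  have hετ : η j = 0 := by
    by_cases hB : memIB g0 gh xb j
    · have := hη0 j
      rw [hη'] at this; simp only [if_pos hB] at this
      rcases mul_eq_zero.mp this with h | h
      · exact h
      · exact absurd h (inv_ne_zero (memIB_facts hB).2.ne')
    · exact hη j hB
  refine ⟨hετ, ?_, ?_⟩ <;>
  · by_cases h0 : memI0 g0 gh xb j
    · have hyj := hy0 j
      rw [hy] at hyj; simp only [if_pos h0] at hyj
      have h1 : a j + b j = 0 := by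
        have := congrArg Prod.fst hyj
        simpa using this
      have h2 : (b j - a j) • wb j = 0 := by
        have := congrArg Prod.snd hyj
        simp only [Prod.snd_add, Prod.smul_snd, Prod.snd_zero, smul_neg] at this
        rw [sub_smul, ← this]; abel
      have h3 : b j - a j = 0 := by
        rcases smul_eq_zero.mp h2 with h | h
        · exact h
        · exact absurd h (hwb j h0)
      linarith [h1, h3]
    · first
      | exact (hab j h0).1
      | exact (hab j h0).2
end Fam
section Surj
variable {n q : ℕ} {m : Fin q → ℕ} {g0 : Fin q → Evec n → ℝ}
  {gh : (j : Fin q) → Evec n → Evec (m j)} {xb : Evec n}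

lemma nondeg_surj (hg : ∀ j, ContDiff ℝ 1 fun x => (g0 j x, gh j x))
    (hnd : Nondegenerate g0 gh xb) :
    ∀ v : (j : Fin q) → Evec (m j), ∃ d : Evec n,
      ∀ j, memI0 g0 gh xb j → fderiv ℝ (gh j) xb d = v j := by
  classical
  intro v
  let L : Evec n →ₗ[ℝ] PiLp 2 (fun j => Evec (m j)) :=
    { toFun := fun d => WithLp.toLp 2 (fun j => if memI0 g0 gh xb j then fderiv ℝ (gh j) xb d else 0)
      map_add' := by
        intro d1 d2; refine PiLp.ext fun j => ?_
        by_cases h : memI0 g0 gh xb j <;>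
          simp [h, Pi.add_apply, PiLp.add_apply]
      map_smul' := by
        intro c d; refine PiLp.ext fun j => ?_
        by_cases h : memI0 g0 gh xb j <;>
          simp [h, Pi.smul_apply, PiLp.smul_apply] }
  have hLapp : ∀ (d : Evec n) (j : Fin q),
      L d j = if memI0 g0 gh xb j then fderiv ℝ (gh j) xb d else 0 := fun _ _ => rfl
  set v' : PiLp 2 (fun j => Evec (m j)) := WithLp.toLp 2 (fun j => if memI0 g0 gh xb j then v j else 0) with hv'
  haveI : CompleteSpace (LinearMap.range L) := FiniteDimensional.complete ℝ _
  obtain ⟨a, ha, b, hb, hab⟩ := (LinearMap.range L).exists_add_mem_mem_orthogonal v'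
  set Y : (j : Fin q) → ℝ × Evec (m j) := fun j =>
    if memI0 g0 gh xb j then ((0:ℝ), b j) else 0 with hY
  have hbort : ∀ d : Evec n, (inner ℝ (L d) b : ℝ) = 0 := fun d =>
    (Submodule.mem_orthogonal _ b).mp hb _ ⟨d, rfl⟩
  have hkey : ∀ d : Evec n, (inner ℝ (ndgComb g0 gh xb 0 Y) d : ℝ) = (inner ℝ (L d) b : ℝ) := by
    intro d
    rw [ndgComb]
    simp only [Pi.zero_apply, zero_smul, zero_add]
    rw [sum_inner, PiLp.inner_apply]
    refine Finset.sum_congr rfl fun j _ => ?_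
    rw [hLapp]
    by_cases h0 : memI0 g0 gh xb j
    · rw [hY]; simp only [if_pos h0]
      rw [inner_dgT (hg j)]
      simp only [zero_mul, zero_add]
      rw [real_inner_comm]
    · rw [hY]; simp only [if_neg h0]
      simp only [dgT_zero, inner_zero_left]
  have hzero : ndgComb g0 gh xb 0 Y = 0 := by
    have h1 : (inner ℝ (ndgComb g0 gh xb 0 Y) (ndgComb g0 gh xb 0 Y) : ℝ) = 0 := by
      rw [hkey]; exact hbort _
    exact inner_self_eq_zero.mp h1
  have hY0 : ∀ j, Y j = 0 :=
    (hnd 0 Y (fun j _ => rfl) (fun j hj => by rw [hY]; simp [hj]) hzero).2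
  have hb0 : b = 0 := by
    refine PiLp.ext fun j => ?_
    by_cases h0 : memI0 g0 gh xb j
    · have hyj := hY0 j
      rw [hY] at hyj; simp only [if_pos h0] at hyj
      exact congrArg Prod.snd hyj
    · obtain ⟨d0, hd0⟩ := ha
      have haj : a j = 0 := by rw [← hd0, hLapp, if_neg h0]
      have hvj : v' j = 0 := by rw [hv']; exact if_neg h0
      have h : v' j = (a + b) j := by rw [hab]
      rw [hvj] at h
      have h' : (0:Evec (m j)) = a j + b j := h
      rw [haj, zero_add] at h'
      exact h'.symm
  have hmem : v' ∈ LinearMap.range L := by rw [hab, hb0, add_zero]; exact ha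
  obtain ⟨d, hd⟩ := hmem
  refine ⟨d, fun j hj => ?_⟩
  calc fderiv ℝ (gh j) xb d = L d j := by rw [hLapp, if_pos hj]
    _ = v j := by rw [hd, hv']; exact if_pos hj

end Surj
section Seq
open Filter

lemma tendsto_inf_principal_range {α : Type*} [TopologicalSpace α] {φ : ℕ → ℕ}
    (hφ : StrictMono φ) {u : ℕ → α} {a : α} (h : Tendsto (u ∘ φ) atTop (𝓝 a)) :
    Tendsto u (atTop ⊓ 𝓟 (Set.range φ)) (𝓝 a) := by
  intro U hU
  have h2 := h hU
  rw [Filter.mem_map, Filter.mem_atTop_sets] at h2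
  obtain ⟨N, hN⟩ := h2
  rw [Filter.mem_map]
  refine Filter.mem_of_superset
    (Filter.inter_mem_inf (Filter.mem_atTop (φ N)) (Filter.mem_principal_self _)) ?_
  rintro k ⟨hk1, i, rfl⟩
  exact hN i (hφ.le_iff_le.mp hk1)

lemma neBot_atTop_inf_principal {I : Set ℕ} (hI : I.Infinite) :
    (atTop ⊓ 𝓟 I : Filter ℕ).NeBot := by
  rw [Filter.inf_principal_neBot_iff]
  intro U hU
  rw [Filter.mem_atTop_sets] at hU
  obtain ⟨N, hN⟩ := hU
  obtain ⟨k, hkI, hk⟩ := hI.exists_gt N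
  exact ⟨k, hN k hk.le, hkI⟩

end Seq

section Weak
variable {n q : ℕ} {m : Fin q → ℕ} {g0 : Fin q → Evec n → ℝ}
  {gh : (j : Fin q) → Evec n → Evec (m j)} {xb : Evec n}

lemma nondeg_weakNondeg (hm : ∀ j, 1 ≤ m j) (hnd : Nondegenerate g0 gh xb) :
    weakNondeg g0 gh xb := by
  classical
  intro x hx
  set e : (j : Fin q) → Evec (m j) := fun j => EuclideanSpace.single ⟨0, hm j⟩ 1 with he
  have he1 : ∀ j, ‖e j‖ = 1 := fun j => by
    rw [he]; simp [EuclideanSpace.norm_single]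
  set w : ℕ → (j : Fin q) → Evec (m j) := fun k j =>
    if h : gh j (x k) = 0 then e j else unitv (gh j (x k)) with hw
  have hw1 : ∀ k j, ‖w k j‖ = 1 := by
    intro k j
    show ‖if h : gh j (x k) = 0 then e j else unitv (gh j (x k))‖ = 1
    by_cases h : gh j (x k) = 0
    · rw [dif_pos h]; exact he1 j
    · rw [dif_neg h]; exact unitv_norm h
  have hcpt : IsCompact (Set.univ.pi fun j : Fin q => Metric.sphere (0 : Evec (m j)) 1) :=
    isCompact_univ_pi fun j => isCompact_sphere 0 1
  have hmem : ∀ k, (w k : ∀ j, Evec (m j)) ∈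
      Set.univ.pi fun j : Fin q => Metric.sphere (0 : Evec (m j)) 1 := by
    intro k
    intro j _
    rw [mem_sphere_zero_iff_norm]
    exact hw1 k j
  obtain ⟨ℓ, hℓ, φ, hφ, hconv⟩ := hcpt.tendsto_subseq hmem
  refine ⟨Set.range φ, w, ℓ, Set.infinite_range_of_injective hφ.injective, ⟨?_, ?_⟩, ?_⟩
  · intro k _ j _
    refine ⟨hw1 k j, fun hne => ?_⟩
    rw [Prod.snd_zero, add_zero] at hne ⊢
    show (if h : gh j (x k) = 0 then e j else unitv (gh j (x k))) = unitv (gh j (x k))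
    exact dif_neg hne
  · intro j _
    have hℓj : ‖ℓ j‖ = 1 := mem_sphere_zero_iff_norm.mp (hℓ j (Set.mem_univ j))
    refine ⟨hℓj, ?_⟩
    have hcj : Tendsto (fun i => w (φ i) j) atTop (𝓝 (ℓ j)) :=
      ((continuous_apply j).continuousAt).tendsto.comp hconv
    exact tendsto_inf_principal_range hφ hcj
  · refine nondeg_famLinIndep hnd ℓ fun j hj => ?_
    have : ‖ℓ j‖ = 1 := mem_sphere_zero_iff_norm.mp (hℓ j (Set.mem_univ j))
    intro h0
    rw [h0, norm_zero] at this
    norm_num at this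

end Weak
section Rev
open Filter
variable {n q : ℕ} {m : Fin q → ℕ} {g0 : Fin q → Evec n → ℝ}
  {gh : (j : Fin q) → Evec n → Evec (m j)} {xb : Evec n}

lemma tendsto_t_nhdsNe : Tendsto (fun k : ℕ => ((k:ℝ)+1)⁻¹) atTop (𝓝[≠] (0:ℝ)) := by
  have h1 : Tendsto (fun k : ℕ => ((k:ℝ)+1)) atTop atTop :=
    tendsto_atTop_add_const_right _ 1 tendsto_natCast_atTop_atTop
  refine tendsto_nhdsWithin_of_tendsto_nhds_of_eventually_within _ h1.inv_tendsto_atTop ?_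
  filter_upwards with k
  have : (0:ℝ) < ((k:ℝ)+1)⁻¹ := by positivity
  exact this.ne'

lemma tendsto_unitv_dir {p : ℕ} {g0' : Evec n → ℝ} {gh' : Evec n → Evec p}
    (hg : ContDiff ℝ 1 fun x => (g0' x, gh' x)) {xb' : Evec n} (h0 : gh' xb' = 0)
    {d : Evec n} {u : Evec p} (hu : fderiv ℝ gh' xb' d = u) (hune : u ≠ 0) :
    (∀ᶠ k : ℕ in atTop, gh' (xb' + ((k:ℝ)+1)⁻¹ • d) ≠ 0) ∧
    Tendsto (fun k : ℕ => unitv (gh' (xb' + ((k:ℝ)+1)⁻¹ • d))) atTop (𝓝 (unitv u)) := by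
  have hder : HasDerivAt (fun t : ℝ => gh' (xb' + t • d)) u 0 := by
    have hc : HasDerivAt (fun t : ℝ => xb' + t • d) d 0 := by
      simpa using ((hasDerivAt_id (0:ℝ)).smul_const d).const_add xb'
    have hF : HasFDerivAt gh' (fderiv ℝ gh' xb') (xb' + (0:ℝ) • d) := by
      simpa using (gh_diff hg xb').hasFDerivAt
    have h3 := hF.comp_hasDerivAt 0 hc
    rw [hu] at h3
    exact h3
  have hslope : Tendsto (fun t : ℝ => t⁻¹ • gh' (xb' + t • d)) (𝓝[≠] (0:ℝ)) (𝓝 u) := by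
    have h := hasDerivAt_iff_tendsto_slope.mp hder
    refine h.congr fun t => ?_
    rw [slope_def_module]
    simp [h0]
  have hmain : Tendsto (fun k : ℕ => ((k:ℝ)+1) • gh' (xb' + ((k:ℝ)+1)⁻¹ • d))
      atTop (𝓝 u) := by
    have := hslope.comp tendsto_t_nhdsNe
    refine this.congr fun k => ?_
    simp [Function.comp, inv_inv]
  have hne : ∀ᶠ k : ℕ in atTop, gh' (xb' + ((k:ℝ)+1)⁻¹ • d) ≠ 0 := by
    filter_upwards [hmain.eventually_ne hune] with k hk
    intro hzero
    apply hk
    rw [hzero, smul_zero]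
  refine ⟨hne, ?_⟩
  have hcont : Tendsto (fun k : ℕ => unitv (((k:ℝ)+1) • gh' (xb' + ((k:ℝ)+1)⁻¹ • d)))
      atTop (𝓝 (unitv u)) := (continuousAt_unitv hune).tendsto.comp hmain
  refine hcont.congr fun k => ?_
  rw [unitv_smul_pos (by positivity : (0:ℝ) < (k:ℝ)+1)]

set_option maxHeartbeats 1000000 in
lemma weak_surj_nondeg (hm : ∀ j, 1 ≤ m j)
    (hg : ∀ j, ContDiff ℝ 1 fun x => (g0 j x, gh j x))
    (hw : weakNondeg g0 gh xb)
    (hsurj : ∀ v : (j : Fin q) → Evec (m j), ∃ d : Evec n,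
      ∀ j, memI0 g0 gh xb j → fderiv ℝ (gh j) xb d = v j) :
    Nondegenerate g0 gh xb := by
  classical
  intro η y hη hy hcomb
  set e : (j : Fin q) → Evec (m j) := fun j => EuclideanSpace.single ⟨0, hm j⟩ 1 with he
  have he1 : ∀ j, ‖e j‖ = 1 := fun j => by
    rw [he]; simp [EuclideanSpace.norm_single]
  set u : (j : Fin q) → Evec (m j) := fun j =>
    if (y j).2 = 0 then e j else unitv ((y j).2) with hu
  have hu1 : ∀ j, ‖u j‖ = 1 := by
    intro j
    rw [hu]
    by_cases h : (y j).2 = 0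
    · simp only [if_pos h]; exact he1 j
    · simp only [if_neg h]; exact unitv_norm h
  have hune : ∀ j, u j ≠ 0 := fun j h => by
    have := hu1 j; rw [h, norm_zero] at this; norm_num at this
  obtain ⟨d, hd⟩ := hsurj u
  set x : ℕ → Evec n := fun k => xb + ((k:ℝ)+1)⁻¹ • d with hxs
  have hx : Tendsto x atTop (𝓝 xb) := by
    have h1 : Tendsto (fun k : ℕ => ((k:ℝ)+1)⁻¹) atTop (𝓝 (0:ℝ)) :=
      (tendsto_atTop_add_const_right _ 1 tendsto_natCast_atTop_atTop).inv_tendsto_atTop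
    have h2 : Tendsto (fun k : ℕ => ((k:ℝ)+1)⁻¹ • d) atTop (𝓝 (0:Evec n)) := by
      simpa using h1.smul_const d
    simpa using tendsto_const_nhds.add h2
  obtain ⟨I, w, wb, hI, ⟨hep1, hep2⟩, hfam⟩ := hw x hx
  haveI := neBot_atTop_inf_principal hI
  have hwb : ∀ j, memI0 g0 gh xb j → wb j = u j := by
    intro j hj
    obtain ⟨hne, htend⟩ := tendsto_unitv_dir (hg j) hj.2 (hd j hj) (hune j)
    have hIe : ∀ᶠ k in atTop ⊓ 𝓟 I, k ∈ I :=
      Filter.mem_inf_of_right (Filter.mem_principal_self I)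
    have heq : ∀ᶠ k in atTop ⊓ 𝓟 I, w k j = unitv (gh j (x k)) := by
      filter_upwards [hIe, hne.filter_mono inf_le_left] with k hkI hkne
      have h2 := (hep1 k hkI j hj).2
      rw [Prod.snd_zero, add_zero] at h2
      exact h2 hkne
    have h1 : Tendsto (fun k => w k j) (atTop ⊓ 𝓟 I) (𝓝 (unitv (u j))) :=
      ((htend.mono_left inf_le_left).congr' (Filter.EventuallyEq.symm heq))
    rw [unitv_of_norm_one (hu1 j)] at h1
    exact tendsto_nhds_unique (hep2 j hj).2 h1
  set η' : Fin q → ℝ := fun j => η j * g0 j xb with hη'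
  set A : Fin q → ℝ := fun j =>
    if memI0 g0 gh xb j then ((y j).1 - ‖(y j).2‖)/2 else 0 with hA
  set B : Fin q → ℝ := fun j =>
    if memI0 g0 gh xb j then ((y j).1 + ‖(y j).2‖)/2 else 0 with hB
  have hcomb' : famComb g0 gh xb wb η' A B = 0 := by
    rw [← hcomb, famComb, ndgComb]
    refine Finset.sum_congr rfl fun j _ => ?_
    have h1 : η' j • dgT (g0 j) (gh j) xb (1, -unitv (gh j xb))
        = η j • dgT (g0 j) (gh j) xb (g0 j xb, -(gh j xb)) := by
      by_cases hBj : memIB g0 gh xb j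
      · rw [dgT_IB hBj, smul_smul]
      · show (η j * g0 j xb) • _ = _
        rw [hη j hBj, zero_mul, zero_smul, zero_smul]
    have h2 : A j • dgT (g0 j) (gh j) xb (1, -(wb j))
        + B j • dgT (g0 j) (gh j) xb (1, wb j) = dgT (g0 j) (gh j) xb (y j) := by
      by_cases h0 : memI0 g0 gh xb j
      · have hAj : A j = ((y j).1 - ‖(y j).2‖)/2 := by rw [hA]; exact if_pos h0
        have hBj : B j = ((y j).1 + ‖(y j).2‖)/2 := by rw [hB]; exact if_pos h0
        have hyj : A j • ((1:ℝ), -(wb j)) + B j • ((1:ℝ), wb j) = y j := by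
          refine Prod.ext ?_ ?_
          · show A j * 1 + B j * 1 = (y j).1
            rw [hAj, hBj]; ring
          · show A j • (-(wb j)) + B j • wb j = (y j).2
            rw [smul_neg, neg_add_eq_sub, ← sub_smul, hwb j h0, hAj, hBj]
            have hc : ((y j).1 + ‖(y j).2‖)/2 - ((y j).1 - ‖(y j).2‖)/2 = ‖(y j).2‖ := by
              ring
            rw [hc, hu]
            by_cases hz : (y j).2 = 0
            · simp only [if_pos hz]; rw [hz, norm_zero, zero_smul]
            · simp only [if_neg hz]; exact norm_smul_unitv hz
        rw [← hyj, dgT_add, dgT_smul, dgT_smul]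
      · have hAj : A j = 0 := by rw [hA]; exact if_neg h0
        have hBj : B j = 0 := by rw [hB]; exact if_neg h0
        rw [hAj, hBj, zero_smul, zero_smul, add_zero, hy j h0, dgT_zero]
    rw [add_assoc, h1, h2]
  have hres := hfam η' A B
    (fun j hj => by show η j * g0 j xb = 0; rw [hη j hj, zero_mul])
    (fun j hj => ⟨by rw [hA]; exact if_neg hj, by rw [hB]; exact if_neg hj⟩)
    hcomb'
  constructor
  · intro j
    by_cases hBj : memIB g0 gh xb j
    · have h := (hres j).1
      rw [hη'] at h
      rcases mul_eq_zero.mp h with h | h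
      · exact h
      · exact absurd h (memIB_facts hBj).2.ne'
    · exact hη j hBj
  · intro j
    by_cases h0 : memI0 g0 gh xb j
    · have hAj := (hres j).2.1
      have hBj := (hres j).2.2
      rw [hA] at hAj; rw [hB] at hBj
      simp only [if_pos h0] at hAj hBj
      have h1 : (y j).1 = 0 := by linarith
      have h2 : ‖(y j).2‖ = 0 := by linarith
      have h3 : (y j).2 = 0 := norm_eq_zero.mp h2
      exact Prod.ext h1 h3
    · exact hy j h0

end Rev

/-- Nondegeneracy holds at a feasible `xb` iff weak-nondegeneracy holds at
`xb` and the linear map `d ↦ (Dĝ_j(xb) d)_{j ∈ I₀(xb)}` is surjective. -/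
theorem stmt4 {n q : ℕ} (m : Fin q → ℕ) (hm : ∀ j, 1 ≤ m j)
    (f : Evec n → ℝ) (hf : ContDiff ℝ 1 f)
    (g0 : Fin q → Evec n → ℝ) (gh : (j : Fin q) → Evec n → Evec (m j))
    (hg : ∀ j, ContDiff ℝ 1 fun x => (g0 j x, gh j x))
    (xb : Evec n) (hxb : ∀ j, ‖gh j xb‖ ≤ g0 j xb) :
    Nondegenerate g0 gh xb ↔
      (weakNondeg g0 gh xb ∧
        ∀ v : (j : Fin q) → Evec (m j), ∃ d : Evec n,
          ∀ j, memI0 g0 gh xb j → fderiv ℝ (gh j) xb d = v j) := by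
  constructor
  · intro hnd
    exact ⟨nondeg_weakNondeg hm hnd, nondeg_surj hg hnd⟩
  · rintro ⟨h1, h2⟩
    exact weak_surj_nondeg hm hg h1 h2
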